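/- arXiv:2005.11949 — 2 statements merged into one kernel-verified Lean document; each statement's English description precedes it below -/
import Mathlib

section
/- For any r, K ∈ ℕ with r ≤ K, there exists a ReLU network φ: ℝ² → ℝ with width 2^{r+1}+3 and depth 4⌈K/r⌉+1 such that for every x of the form x = Σ_{i=1}^K 2^{−i} x_i with all x_i ∈ {0,1}, and every integer k with 1 ≤ k ≤ K, one has φ(x, k) = x_k. -/
/-!
Write `x = R / 2 ^ K` with `R < 2 ^ K`, so that `x_k` is bit `K - k` of `R`. The network reads
`r` bits per block of four layers, carrying the state `(y, k, acc)` where `y = 2 ^ a x mod 1`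
after `a` bits. In a block, the `2 ^ r - 1` differences
`σ(2 ^ K (2 ^ r y - s) + 1) - σ(2 ^ K (2 ^ r y - s))` are the indicators of `s ≤ m`, where
`m = ⌊2 ^ r y⌋`, because `2 ^ K (2 ^ r y - s)` is an integer. Linear combinations of these
indicators give `m`, hence the new state `2 ^ r y - m`, and, by telescoping, each binary digit
of `m`. The digit `β` at position `c = k` is selected by `σ(β - σ(k - c) - σ(c - k))` and added
to `acc`; after `⌈K / r⌉` blocks, `acc = x_k`.
-/

open scoped BigOperators ENNReal

noncomputable section

/-- `f` is an affine map `x ↦ A x + b`. -/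
def IsAffineMap (din dout : ℕ) (f : (Fin din → ℝ) → (Fin dout → ℝ)) : Prop :=
  ∃ (A : Matrix (Fin dout) (Fin din) ℝ) (b : Fin dout → ℝ),
    ∀ x i, f x i = (∑ j, A i j * x j) + b i

/-- `ReluNetExact din dout f N L` asserts that `f = T_L ∘ σ ∘ ⋯ ∘ σ ∘ T_1` where each `T_l`
is affine, `σ` is the coordinatewise ReLU `t ↦ max t 0`, all intermediate dimensions are at
most `N` (the width), and there are `L` affine layers (the depth). -/
inductive ReluNetExact : (din dout : ℕ) → ((Fin din → ℝ) → (Fin dout → ℝ)) → ℕ → ℕ → Prop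
  | affine {din dout N : ℕ} {f : (Fin din → ℝ) → (Fin dout → ℝ)}
      (hf : IsAffineMap din dout f) : ReluNetExact din dout f N 1
  | comp {din k dout N L : ℕ} (hk : k ≤ N) {T : (Fin din → ℝ) → (Fin k → ℝ)}
      (hT : IsAffineMap din k T) {g : (Fin k → ℝ) → (Fin dout → ℝ)}
      (hg : ReluNetExact k dout g N L) :
      ReluNetExact din dout (fun x => g (fun i => max (T x i) 0)) N (L + 1)

/-- `f` is representable by a ReLU network with width at most `N` and depth at most `L`. -/
def IsReluNet (din dout : ℕ) (f : (Fin din → ℝ) → (Fin dout → ℝ)) (N L : ℕ) : Prop :=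
  ∃ L' ≤ L, ReluNetExact din dout f N L'

/-- Scalar-valued version of `IsReluNet`. -/
def IsReluNet1 (din : ℕ) (f : (Fin din → ℝ) → ℝ) (N L : ℕ) : Prop :=
  IsReluNet din 1 (fun x _ => f x) N L

open Finset

@[fun_prop]
def IsAffineFun {ι : Type*} [Fintype ι] (u : (ι → ℝ) → ℝ) : Prop :=
  ∃ (a : ι → ℝ) (c : ℝ), ∀ x, u x = ∑ j, a j * x j + c

namespace IsAffineFun

variable {ι κ : Type*} [Fintype ι] [Fintype κ]

@[fun_prop]
lemma const (c : ℝ) : IsAffineFun fun _ : ι → ℝ => c := ⟨0, c, by simp⟩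

@[fun_prop]
lemma apply [DecidableEq ι] (j : ι) : IsAffineFun fun x : ι → ℝ => x j :=
  ⟨Pi.single j 1, 0, fun x => by simp [Pi.single_apply]⟩

@[fun_prop]
lemma add {u v : (ι → ℝ) → ℝ} (hu : IsAffineFun u) (hv : IsAffineFun v) :
    IsAffineFun fun x => u x + v x := by
  obtain ⟨a, c, ha⟩ := hu
  obtain ⟨a', c', ha'⟩ := hv
  exact ⟨a + a', c + c', fun x => by simp [ha, ha', add_mul, sum_add_distrib]; ring⟩

@[fun_prop]
lemma const_mul {u : (ι → ℝ) → ℝ} (t : ℝ) (hu : IsAffineFun u) :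
    IsAffineFun fun x => t * u x := by
  obtain ⟨a, c, ha⟩ := hu
  exact ⟨t • a, t * c, fun x => by simp [ha, mul_sum, mul_add, mul_assoc]⟩

@[fun_prop]
lemma neg {u : (ι → ℝ) → ℝ} (hu : IsAffineFun u) : IsAffineFun fun x => -u x := by
  simpa using hu.const_mul (-1)

@[fun_prop]
lemma sub {u v : (ι → ℝ) → ℝ} (hu : IsAffineFun u) (hv : IsAffineFun v) :
    IsAffineFun fun x => u x - v x := by
  simpa [sub_eq_add_neg] using hu.add hv.neg

@[fun_prop]
lemma sum {α : Type*} (s : Finset α) {u : α → (ι → ℝ) → ℝ} (hu : ∀ i ∈ s, IsAffineFun (u i)) :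
    IsAffineFun fun x => ∑ i ∈ s, u i x := by
  classical
  induction s using Finset.induction_on with
  | empty => simpa using const (ι := ι) 0
  | insert a s ha ih =>
    simp only [sum_insert ha]
    exact (hu a (mem_insert_self a s)).add (ih fun i hi => hu i (mem_insert_of_mem hi))

@[fun_prop]
lemma comp {u : (κ → ℝ) → ℝ} (hu : IsAffineFun u) {F : (ι → ℝ) → κ → ℝ}
    (hF : ∀ j, IsAffineFun fun x => F x j) : IsAffineFun fun x => u (F x) := by
  obtain ⟨a, c, ha⟩ := hu
  simp only [ha]
  fun_prop

end IsAffineFun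

lemma isAffineMap_of_isAffineFun {din dout : ℕ} {f : (Fin din → ℝ) → Fin dout → ℝ}
    (hf : ∀ i, IsAffineFun fun x => f x i) : IsAffineMap din dout f := by
  choose a c ha using hf
  exact ⟨fun i j => a i j, c, fun x i => ha i x⟩

def relu {ι : Type*} (v : ι → ℝ) : ι → ℝ := fun i => max (v i) 0

lemma relu_of_nonneg {ι : Type*} {v : ι → ℝ} (hv : ∀ i, 0 ≤ v i) : relu v = v :=
  funext fun i => max_eq_left (hv i)

lemma ReluNetExact.relu_comp {ι : Type*} [Fintype ι] {din dout k N L : ℕ} (e : ι ≃ Fin k)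
    (hk : k ≤ N) {T : (Fin din → ℝ) → ι → ℝ} (hT : ∀ i, IsAffineFun fun x => T x i)
    {g : (ι → ℝ) → Fin dout → ℝ} (hg : ReluNetExact k dout (fun y => g (y ∘ e)) N L) :
    ReluNetExact din dout (fun x => g (relu (T x))) N (L + 1) := by
  have hT' : IsAffineMap din k fun x => T x ∘ e.symm :=
    isAffineMap_of_isAffineFun fun i => by fun_prop
  convert ReluNetExact.comp hk hT' hg using 3 with x
  ext i
  simp [relu]

lemma relu_add_one_sub_relu_intCast (n : ℤ) :
    max ((n : ℝ) + 1) 0 - max (n : ℝ) 0 = if 0 ≤ n then 1 else 0 := by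
  split_ifs with h
  · have : (0 : ℝ) ≤ n := by exact_mod_cast h
    rw [max_eq_left (by linarith), max_eq_left this]
    ring
  · have : (n : ℝ) + 1 ≤ 0 := by exact_mod_cast (by omega : n + 1 ≤ 0)
    rw [max_eq_right this, max_eq_right (by linarith)]
    ring

lemma relu_sub_relu_sub_relu_natCast {β : ℝ} (hβ₀ : 0 ≤ β) (hβ₁ : β ≤ 1) (k c : ℕ) :
    max (β - max ((k : ℝ) - c) 0 - max ((c : ℝ) - k) 0) 0 = if k = c then β else 0 := by
  split_ifs with h
  · simp [h, hβ₀]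
  · rcases Nat.lt_or_gt_of_ne h with h | h
    · have : (k : ℝ) + 1 ≤ c := by exact_mod_cast h
      rw [max_eq_right (by linarith : (k : ℝ) - c ≤ 0), max_eq_left (by linarith : 0 ≤ (c : ℝ) - k),
        max_eq_right (by linarith)]
    · have : (c : ℝ) + 1 ≤ k := by exact_mod_cast h
      rw [max_eq_left (by linarith : 0 ≤ (k : ℝ) - c), max_eq_right (by linarith : (c : ℝ) - k ≤ 0),
        max_eq_right (by linarith)]

lemma sum_range_sub_mul_ite_le {m q : ℕ} (hm : m ≤ q) (g : ℕ → ℝ) :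
    ∑ s ∈ range q, (g (s + 1) - g s) * (if s + 1 ≤ m then 1 else 0) = g m - g 0 := by
  rw [← sum_range_sub, ← sum_range_add_sum_Ico _ hm, sum_eq_zero (s := Ico m q)]
  · rw [add_zero]
    refine sum_congr rfl fun s hs => ?_
    rw [if_pos (by simpa using hs), mul_one]
  · intro s hs
    rw [if_neg (by simp at hs; omega), mul_zero]

lemma sum_range_ite_add_eq {a r k : ℕ} (f : ℕ → ℝ) :
    ∑ t ∈ range r, (if k = a + t + 1 then f t else 0) =
      if a < k ∧ k ≤ a + r then f (k - a - 1) else 0 := by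
  split_ifs with h
  · rw [sum_eq_single_of_mem (k - a - 1) (by simp; omega)]
    · rw [if_pos (by omega)]
    · intro t _ ht
      rw [if_neg (by omega)]
  · exact sum_eq_zero fun t ht => if_neg (by simp at ht; omega)

lemma Nat.testBit_two_pow_mul_div_two_pow {r K j : ℕ} (R : ℕ) (h : r ≤ j + K) :
    (2 ^ r * R / 2 ^ K).testBit j = R.testBit (j + K - r) := by
  rw [Nat.testBit_div_two_pow, Nat.testBit_two_pow_mul]
  simp [h]

lemma Nat.testBit_two_pow_mul_mod_two_pow {r K j : ℕ} (R : ℕ) (h : r ≤ j) (hj : j < K) :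
    (2 ^ r * R % 2 ^ K).testBit j = R.testBit (j - r) := by
  rw [Nat.testBit_mod_two_pow, Nat.testBit_two_pow_mul]
  simp [h, hj]

lemma Nat.testBit_sum_two_pow (s : Finset ℕ) (j : ℕ) :
    (∑ i ∈ s, 2 ^ i).testBit j = decide (j ∈ s) := by
  rw [Bool.eq_iff_iff, ← Nat.mem_bitIndices, ← List.mem_toFinset,
    Finset.toFinset_bitIndices_sum_two_pow, decide_eq_true_iff]

lemma three_mul_le_two_pow_succ (r : ℕ) : 3 * r ≤ 2 ^ (r + 1) := by
  induction r with
  | zero => simp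
  | succ n ih =>
    have := Nat.one_lt_two_pow (n := n + 1) (by omega)
    rw [pow_succ]
    omega

namespace BitExtraction

variable (r K : ℕ)

def bitVal (n j : ℕ) : ℝ := (n.testBit j).toNat

lemma bitVal_nonneg (n j : ℕ) : 0 ≤ bitVal n j := Nat.cast_nonneg _

lemma bitVal_le_one (n j : ℕ) : bitVal n j ≤ 1 := by
  unfold bitVal
  exact_mod_cast Bool.toNat_le _

lemma zero_bitVal (j : ℕ) : bitVal 0 j = 0 := by simp [bitVal]

/- The state passed between blocks is `![y, k, acc]`. Hidden layers are indexed by sum types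
whose `inl` part carries the state; in the last three groups of `bitLayer`, neuron `t : Fin r`
deals with digit `a + t + 1` of `x`, which is digit `r - 1 - t` of `⌊2 ^ r y⌋`. -/

def stepLayer (x : Fin 3 → ℝ) : Fin 3 ⊕ (Fin (2 ^ r - 1) ⊕ Fin (2 ^ r - 1)) → ℝ :=
  Sum.elim x (Sum.elim (fun s => 2 ^ K * (2 ^ r * x 0 - ((s + 1 : ℕ) : ℝ)) + 1)
    (fun s => 2 ^ K * (2 ^ r * x 0 - ((s + 1 : ℕ) : ℝ))))

def bitLayer (a : ℕ) (z : Fin 3 ⊕ (Fin (2 ^ r - 1) ⊕ Fin (2 ^ r - 1)) → ℝ) :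
    Fin 3 ⊕ (Fin r ⊕ (Fin r ⊕ Fin r)) → ℝ :=
  Sum.elim
    ![2 ^ r * z (.inl 0) - ∑ s, (z (.inr (.inl s)) - z (.inr (.inr s))), z (.inl 1), z (.inl 2)]
    (Sum.elim
      (fun t => ∑ s : Fin (2 ^ r - 1), (bitVal (s + 1) (r - 1 - t) - bitVal s (r - 1 - t)) *
        (z (.inr (.inl s)) - z (.inr (.inr s))))
      (Sum.elim (fun t => z (.inl 1) - ((a + t + 1 : ℕ) : ℝ))
        (fun t => ((a + t + 1 : ℕ) : ℝ) - z (.inl 1))))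

def selectLayer (z : Fin 3 ⊕ (Fin r ⊕ (Fin r ⊕ Fin r)) → ℝ) : Fin 3 ⊕ Fin r → ℝ :=
  Sum.elim (fun i => z (.inl i))
    (fun t => z (.inr (.inl t)) - z (.inr (.inr (.inl t))) - z (.inr (.inr (.inr t))))

def sumLayer (z : Fin 3 ⊕ Fin r → ℝ) : Fin 3 → ℝ :=
  ![z (.inl 0), z (.inl 1), z (.inl 2) + ∑ t, z (.inr t)]

def block (a : ℕ) (x : Fin 3 → ℝ) : Fin 3 → ℝ :=
  sumLayer r (relu (selectLayer r (relu (bitLayer r a (relu (stepLayer r K x))))))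

def bitNet : ℕ → ℕ → (Fin 3 → ℝ) → ℝ
  | 0, _, x => x 2
  | c + 1, a, x => bitNet c (a + r) (relu (block r K a x))

lemma stepLayer_isAffineFun : ∀ i, IsAffineFun fun x => stepLayer r K x i := by
  rintro (i | s | s) <;> simp only [stepLayer, Sum.elim_inl, Sum.elim_inr] <;> fun_prop

lemma bitLayer_isAffineFun (a : ℕ) : ∀ i, IsAffineFun fun z => bitLayer r a z i := by
  rintro ((i : Fin 3) | t | t | t)
  · fin_cases i <;> simp [bitLayer] <;> fun_prop
  all_goals simp only [bitLayer, Sum.elim_inr, Sum.elim_inl]; fun_prop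

lemma selectLayer_isAffineFun : ∀ i, IsAffineFun fun z => selectLayer r z i := by
  rintro (i | t) <;> simp only [selectLayer, Sum.elim_inl, Sum.elim_inr] <;> fun_prop

lemma sumLayer_isAffineFun : ∀ i, IsAffineFun fun z => sumLayer r z i := by
  intro i
  fin_cases i <;> simp [sumLayer] <;> fun_prop

lemma reluNetExact_block_comp {d dout N L : ℕ} (hN : 2 ^ (r + 1) + 3 ≤ N) (a : ℕ)
    {E : (Fin d → ℝ) → Fin 3 → ℝ} (hE : ∀ i, IsAffineFun fun v => E v i)
    {G : (Fin 3 → ℝ) → Fin dout → ℝ} (hG : ReluNetExact 3 dout G N L) :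
    ReluNetExact d dout (fun v => G (relu (block r K a (E v)))) N (L + 4) := by
  have h3r := three_mul_le_two_pow_succ r
  have hpow : 2 ^ (r + 1) = 2 * 2 ^ r := by ring
  refine ReluNetExact.relu_comp (Fintype.equivFin _) (by simp; omega)
    (g := fun z => G (relu (sumLayer r (relu (selectLayer r (relu (bitLayer r a z)))))))
    (fun i => (stepLayer_isAffineFun r K i).comp hE) ?_
  refine ReluNetExact.relu_comp (Fintype.equivFin _) (by simp; omega)
    (g := fun z => G (relu (sumLayer r (relu (selectLayer r z)))))
    (fun i => (bitLayer_isAffineFun r a i).comp fun _ => by fun_prop) ?_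
  refine ReluNetExact.relu_comp (Fintype.equivFin _) (by simp; omega)
    (g := fun z => G (relu (sumLayer r z)))
    (fun i => (selectLayer_isAffineFun r i).comp fun _ => by fun_prop) ?_
  exact ReluNetExact.relu_comp (Equiv.refl _) (by omega)
    (fun i => (sumLayer_isAffineFun r i).comp fun _ => by fun_prop) hG

lemma reluNetExact_bitNet {d : ℕ} {E : (Fin d → ℝ) → Fin 3 → ℝ}
    (hE : ∀ i, IsAffineFun fun v => E v i) (c a : ℕ) :
    ReluNetExact d 1 (fun v _ => bitNet r K c a (E v)) (2 ^ (r + 1) + 3) (4 * c + 1) := by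
  induction c generalizing d a E with
  | zero => exact .affine (isAffineMap_of_isAffineFun fun _ => hE 2)
  | succ c ih =>
    rw [show 4 * (c + 1) + 1 = 4 * c + 1 + 4 by ring]
    exact reluNetExact_block_comp r K le_rfl a hE (ih (E := fun y => y) (fun i => by fun_prop) _)

lemma relu_stepLayer_sub {R : ℕ} {x : Fin 3 → ℝ} (hx : x 0 = R / 2 ^ K) (s : Fin (2 ^ r - 1)) :
    relu (stepLayer r K x) (.inr (.inl s)) - relu (stepLayer r K x) (.inr (.inr s)) =
      if (s : ℕ) + 1 ≤ 2 ^ r * R / 2 ^ K then 1 else 0 := by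
  have hint : (2 : ℝ) ^ K * (2 ^ r * (R / 2 ^ K) - ((s + 1 : ℕ) : ℝ)) =
      (((2 ^ r * R : ℕ) : ℤ) - ((s + 1) * 2 ^ K : ℕ) : ℤ) := by
    push_cast
    field_simp
  simp only [relu, stepLayer, Sum.elim_inr, Sum.elim_inl, hx, hint,
    relu_add_one_sub_relu_intCast, sub_nonneg, Nat.cast_le,
    Nat.le_div_iff_mul_le (Nat.two_pow_pos K)]

lemma sum_mul_relu_stepLayer_sub {R : ℕ} (hR : R < 2 ^ K) {x : Fin 3 → ℝ}
    (hx : x 0 = R / 2 ^ K) (g : ℕ → ℝ) :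
    ∑ s : Fin (2 ^ r - 1), (g (s + 1) - g s) *
        (relu (stepLayer r K x) (.inr (.inl s)) - relu (stepLayer r K x) (.inr (.inr s))) =
      g (2 ^ r * R / 2 ^ K) - g 0 := by
  have hm : 2 ^ r * R / 2 ^ K < 2 ^ r := Nat.div_lt_of_lt_mul <| by
    rw [mul_comm (2 ^ K)]
    exact Nat.mul_lt_mul_of_pos_left hR (Nat.two_pow_pos r)
  simp only [relu_stepLayer_sub r K hx]
  rw [Fin.sum_univ_eq_sum_range
    (fun s => (g (s + 1) - g s) * if s + 1 ≤ 2 ^ r * R / 2 ^ K then (1 : ℝ) else 0)]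
  exact sum_range_sub_mul_ite_le (by omega) g

lemma relu_bitLayer_relu_stepLayer {R : ℕ} (hR : R < 2 ^ K) (k : ℕ) {acc : ℝ} (hacc : 0 ≤ acc)
    (a : ℕ) :
    relu (bitLayer r a (relu (stepLayer r K ![(R : ℝ) / 2 ^ K, k, acc]))) =
      Sum.elim ![((2 ^ r * R % 2 ^ K : ℕ) : ℝ) / 2 ^ K, k, acc]
        (Sum.elim (fun t : Fin r => bitVal (2 ^ r * R / 2 ^ K) (r - 1 - t))
          (Sum.elim (fun t : Fin r => max ((k : ℝ) - (a + t + 1 : ℕ)) 0)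
            (fun t : Fin r => max (((a + t + 1 : ℕ) : ℝ) - k) 0))) := by
  set x : Fin 3 → ℝ := ![(R : ℝ) / 2 ^ K, k, acc]
  have hcount := sum_mul_relu_stepLayer_sub r K hR (x := x) rfl
  set m := 2 ^ r * R / 2 ^ K
  set z := relu (stepLayer r K x)
  have hz : ∀ i, z (.inl i) = x i := fun i =>
    max_eq_left <| by
      fin_cases i <;> simp [stepLayer, x, hacc]
      positivity
  have hsum : ∑ s : Fin (2 ^ r - 1), (z (.inr (.inl s)) - z (.inr (.inr s))) = m := by
    simpa using hcount Nat.cast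
  have hrem : (2 : ℝ) ^ r * (R / 2 ^ K) - m = ((2 ^ r * R % 2 ^ K : ℕ) : ℝ) / 2 ^ K := by
    have h : ((2 ^ r * R : ℕ) : ℝ) = 2 ^ K * m + ((2 ^ r * R % 2 ^ K : ℕ) : ℝ) := by
      exact_mod_cast (Nat.div_add_mod _ _).symm
    rw [eq_div_iff (by positivity), sub_mul, mul_assoc, div_mul_cancel₀ _ (by positivity)]
    push_cast at h
    linarith
  ext ((i : Fin 3) | t | t | t)
  · fin_cases i <;> simp [relu, bitLayer, hz, hsum, hrem, x, hacc]
    positivity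
  · have h := hcount (bitVal · (r - 1 - t))
    rw [zero_bitVal, sub_zero] at h
    simp [relu, bitLayer, h, bitVal_nonneg]
  all_goals simp [relu, bitLayer, hz, x]

lemma block_eval {R : ℕ} (hR : R < 2 ^ K) (k : ℕ) {acc : ℝ} (hacc : 0 ≤ acc) (a : ℕ) :
    block r K a ![(R : ℝ) / 2 ^ K, k, acc] =
      ![((2 ^ r * R % 2 ^ K : ℕ) : ℝ) / 2 ^ K, k,
        acc + ∑ t : Fin r,
          if k = a + t + 1 then bitVal (2 ^ r * R / 2 ^ K) (r - 1 - t) else 0] := by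
  have hselect : relu (selectLayer r (relu (bitLayer r a (relu (stepLayer r K
      ![(R : ℝ) / 2 ^ K, k, acc]))))) = Sum.elim ![((2 ^ r * R % 2 ^ K : ℕ) : ℝ) / 2 ^ K, k, acc]
      (fun t : Fin r => if k = a + t + 1 then bitVal (2 ^ r * R / 2 ^ K) (r - 1 - t) else 0) := by
    rw [relu_bitLayer_relu_stepLayer r K hR k hacc a]
    ext (i | t)
    · fin_cases i <;> simp [relu, selectLayer, hacc]
      positivity
    · exact relu_sub_relu_sub_relu_natCast (bitVal_nonneg _ _) (bitVal_le_one _ _) _ _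
  rw [block, hselect]
  ext i
  fin_cases i <;> simp [sumLayer]

lemma bitNet_eval {k : ℕ} (hk : k ≤ K) (c : ℕ) :
    ∀ (a R : ℕ) (acc : ℝ), R < 2 ^ K → 0 ≤ acc →
      bitNet r K c a ![(R : ℝ) / 2 ^ K, k, acc] =
        acc + if a < k ∧ k ≤ a + c * r then bitVal R (K + a - k) else 0 := by
  induction c with
  | zero => intro a R acc _ _; simp [bitNet]
  | succ c ih =>
    intro a R acc hR hacc
    set sel : ℕ → ℝ := fun t =>
      if k = a + t + 1 then bitVal (2 ^ r * R / 2 ^ K) (r - 1 - t) else 0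
    have hsel : 0 ≤ ∑ t ∈ range r, sel t := sum_nonneg fun t _ => by
      simp only [sel]
      split_ifs <;> simp [bitVal_nonneg]
    rw [bitNet, block_eval r K hR k hacc a, Fin.sum_univ_eq_sum_range sel,
      relu_of_nonneg (by intro i; fin_cases i <;> simp <;> positivity),
      ih _ _ _ (Nat.mod_lt _ (Nat.two_pow_pos K)) (by positivity), sum_range_ite_add_eq,
      show a + (c + 1) * r = a + r + c * r by ring]
    by_cases h₁ : a < k ∧ k ≤ a + r
    · rw [if_pos h₁, if_neg (by omega), if_pos (by omega), add_zero]
      unfold bitVal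
      rw [Nat.testBit_two_pow_mul_div_two_pow _ (by omega),
        show r - 1 - (k - a - 1) + K - r = K + a - k by omega]
    · rw [if_neg h₁, add_zero]
      by_cases h₂ : a + r < k ∧ k ≤ a + r + c * r
      · rw [if_pos h₂, if_pos (by omega)]
        unfold bitVal
        rw [Nat.testBit_two_pow_mul_mod_two_pow _ (by omega) (by omega),
          show K + (a + r) - k - r = K + a - k by omega]
      · rw [if_neg h₂, if_neg (by omega)]

lemma exists_binary_numerator {b : ℕ → ℝ} (hb : ∀ i, b i = 0 ∨ b i = 1) :
    ∃ X : ℕ, X < 2 ^ K ∧ (X : ℝ) / 2 ^ K = ∑ i ∈ Icc 1 K, b i / 2 ^ i ∧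
      ∀ k, 1 ≤ k → k ≤ K → bitVal X (K - k) = b k := by
  set S := (range K).filter fun j => b (K - j) = 1
  refine ⟨∑ j ∈ S, 2 ^ j, Nat.geomSum_lt le_rfl fun j hj => by simpa using (mem_filter.1 hj).1,
    ?_, fun k hk₁ hk₂ => ?_⟩
  · have hS : ((∑ j ∈ S, 2 ^ j : ℕ) : ℝ) = ∑ j ∈ range K, b (K - j) * 2 ^ j := by
      rw [Nat.cast_sum, sum_filter]
      refine sum_congr rfl fun j _ => ?_
      rcases hb (K - j) with h | h <;> simp [h]
    rw [hS, sum_div]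
    refine sum_nbij' (fun j => K - j) (fun i => K - i) ?_ ?_ ?_ ?_ ?_
    all_goals intro j hj
    all_goals simp only [mem_range, mem_Icc] at hj
    · simp only [mem_Icc]; omega
    · simp only [mem_range]; omega
    · omega
    · omega
    · rw [div_eq_div_iff (by positivity) (by positivity), mul_assoc, ← pow_add,
        show j + (K - j) = K by omega]
  · rw [bitVal, Nat.testBit_sum_two_pow]
    have hmem : K - k ∈ S ↔ b k = 1 := by
      simp only [S, mem_filter, mem_range, show K - (K - k) = k by omega, and_iff_right_iff_imp]
      intro
      omega
    rcases hb k with h | h <;> simp [hmem, h]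

end BitExtraction

open BitExtraction

theorem stmt7_general (r K : ℕ) (hr : 0 < r) :
    ∃ φ : (Fin 2 → ℝ) → ℝ,
      IsReluNet1 2 φ (2 ^ (r + 1) + 3) (4 * ⌈(K : ℝ) / (r : ℝ)⌉₊ + 1) ∧
      ∀ b : ℕ → ℝ, (∀ i, b i = 0 ∨ b i = 1) →
        ∀ k : ℕ, 1 ≤ k → k ≤ K →
          φ ![∑ i ∈ Finset.Icc 1 K, b i / 2 ^ i, (k : ℝ)] = b k := by
  set M := ⌈(K : ℝ) / r⌉₊
  have hKM : K ≤ M * r := by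
    have := Nat.le_ceil ((K : ℝ) / r)
    rw [div_le_iff₀ (by exact_mod_cast hr)] at this
    exact_mod_cast this
  refine ⟨fun v => bitNet r K M 0 ![v 0, v 1, 0],
    ⟨_, le_rfl, reluNetExact_bitNet r K (fun i => ?_) M 0⟩, fun b hb k hk₁ hk₂ => ?_⟩
  · fin_cases i <;> simp <;> fun_prop
  · obtain ⟨X, hX, hXx, hXb⟩ := exists_binary_numerator K hb
    simp only [Matrix.cons_val_zero, Matrix.cons_val_one]
    rw [← hXx, bitNet_eval r K hk₂ M 0 X 0 hX le_rfl, if_pos ⟨by omega, by omega⟩, zero_add,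
      Nat.add_zero, hXb k hk₁ hk₂]

/-- Lemma `extract one bit`. -/
theorem stmt7 (r K : ℕ) (hr : 0 < r) (hrK : r ≤ K) :
    ∃ φ : (Fin 2 → ℝ) → ℝ,
      IsReluNet1 2 φ (2 ^ (r + 1) + 3) (4 * ⌈(K : ℝ) / (r : ℝ)⌉₊ + 1) ∧
      ∀ b : ℕ → ℝ, (∀ i, b i = 0 ∨ b i = 1) →
        ∀ k : ℕ, 1 ≤ k → k ≤ K →
          φ ![∑ i ∈ Finset.Icc 1 K, b i / 2 ^ i, (k : ℝ)] = b k :=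
  stmt7_general r K hr
end
end

section
/- For any N, L ∈ ℕ and any integer k ≥ 2, there exists a ReLU network Φ_k: ℝ^k → ℝ with width 9N + k + 7 and depth 7k(k−1)L such that |Φ_k(x) − x_1 x_2 ⋯ x_k| ≤ 9(k−1)(N+1)^{−7kL} for all x = (x_1, …, x_k) ∈ [0,1]^k, and moreover Φ_k(x) = 0 whenever x_i = 0 for some 1 ≤ i ≤ k. -/
open scoped BigOperators ENNReal

noncomputable section

/-!
The square on `[0, 1]` is approximated as in Yarotsky's construction, with a `q`-tooth triangle
wave `T` in place of the hat function. The chord interpolant of `t ^ 2` at the nodes `j / q` has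
error `T t (2 - T t) / (2q) ^ 2`, again a parabola, now in the variable `T t`; subtracting the
chord interpolant of that parabola in turn, `r` hidden layers of width `2q + 2` leave an error at
most `(2q) ^ (-2r)`. By polarization, `xy = 2 (((x + y) / 2) ^ 2 - (x / 2) ^ 2 - (y / 2) ^ 2)`,
three squaring networks in parallel give a multiplication gate, which is clamped to `[0, 1]` so
that gates can be chained: `x₁ ⋯ xₖ` is computed by `k - 1` gates, the inputs not yet used being
carried along through ReLUs (which fix nonnegative numbers). Errors add up along the chain since
all factors lie in `[0, 1]`.
-/

open Finset

def affineFunctions (d : ℕ) : Submodule ℝ ((Fin d → ℝ) → ℝ) where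
  carrier := {g | ∃ (c : Fin d → ℝ) (b : ℝ), ∀ x, g x = ∑ j, c j * x j + b}
  zero_mem' := ⟨0, 0, by simp⟩
  add_mem' := by
    rintro g h ⟨c, b, hg⟩ ⟨c', b', hh⟩
    exact ⟨c + c', b + b', fun x => by
      simp only [Pi.add_apply, hg, hh, add_mul, sum_add_distrib]; ring⟩
  smul_mem' := by
    rintro r g ⟨c, b, hg⟩
    exact ⟨r • c, r * b, fun x => by
      simp only [Pi.smul_apply, hg, smul_eq_mul, mul_add, mul_sum, mul_assoc]⟩

namespace affineFunctions

variable {d : ℕ} {g h : (Fin d → ℝ) → ℝ}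

lemma const_mem (d : ℕ) (b : ℝ) : (fun _ => b) ∈ affineFunctions d := ⟨0, b, by simp⟩

lemma apply_mem (j : Fin d) : (fun x => x j) ∈ affineFunctions d :=
  ⟨Pi.single j 1, 0, fun x => by simp [Pi.single_apply]⟩

lemma add_mem' (hg : g ∈ affineFunctions d) (hh : h ∈ affineFunctions d) :
    (fun x => g x + h x) ∈ affineFunctions d := add_mem hg hh

lemma sub_mem' (hg : g ∈ affineFunctions d) (hh : h ∈ affineFunctions d) :
    (fun x => g x - h x) ∈ affineFunctions d := sub_mem hg hh

lemma const_mul_mem (r : ℝ) (hg : g ∈ affineFunctions d) :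
    (fun x => r * g x) ∈ affineFunctions d := Submodule.smul_mem _ r hg

lemma div_const_mem (hg : g ∈ affineFunctions d) (r : ℝ) :
    (fun x => g x / r) ∈ affineFunctions d := by
  simpa only [div_eq_inv_mul] using const_mul_mem r⁻¹ hg

lemma sum_mem' {ι : Type*} (s : Finset ι) {F : ι → (Fin d → ℝ) → ℝ}
    (hF : ∀ i ∈ s, F i ∈ affineFunctions d) : (fun x => ∑ i ∈ s, F i x) ∈ affineFunctions d := by
  simpa only [← Finset.sum_apply] using Submodule.sum_mem _ hF

lemma comp_mem {a : ℕ} {T : (Fin a → ℝ) → Fin d → ℝ} (hT : IsAffineMap a d T)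
    (hg : g ∈ affineFunctions d) : (fun x => g (T x)) ∈ affineFunctions a := by
  obtain ⟨c, b, hg⟩ := hg
  obtain ⟨A, bA, hA⟩ := hT
  simp only [hg, hA, mul_add, sum_add_distrib, mul_sum]
  refine add_mem' (add_mem' (sum_mem' _ fun j _ => sum_mem' _ fun i _ => ?_)
    (const_mem _ _)) (const_mem _ _)
  simpa only [mul_assoc] using const_mul_mem (c j * A j i) (apply_mem i)

end affineFunctions

open affineFunctions

lemma isAffineMap_of_forall_mem {a b : ℕ} {f : (Fin a → ℝ) → Fin b → ℝ}
    (h : ∀ i, (fun x => f x i) ∈ affineFunctions a) : IsAffineMap a b f := by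
  choose c bb hc using h
  exact ⟨fun i j => c i j, bb, fun x i => hc i x⟩

lemma IsAffineMap.apply_mem {a b : ℕ} {f : (Fin a → ℝ) → Fin b → ℝ} (hf : IsAffineMap a b f)
    (i : Fin b) : (fun x => f x i) ∈ affineFunctions a :=
  comp_mem hf (affineFunctions.apply_mem i)

lemma IsAffineMap.comp {a b c : ℕ} {f : (Fin a → ℝ) → Fin b → ℝ} {g : (Fin b → ℝ) → Fin c → ℝ}
    (hg : IsAffineMap b c g) (hf : IsAffineMap a b f) : IsAffineMap a c (fun x => g (f x)) :=
  isAffineMap_of_forall_mem fun i => comp_mem hf (IsAffineMap.apply_mem hg i)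

lemma isAffineMap_id (a : ℕ) : IsAffineMap a a id :=
  isAffineMap_of_forall_mem affineFunctions.apply_mem

lemma IsAffineMap.append {a a' b b' : ℕ} {f : (Fin a → ℝ) → Fin b → ℝ}
    {g : (Fin a' → ℝ) → Fin b' → ℝ} (hf : IsAffineMap a b f) (hg : IsAffineMap a' b' g) :
    IsAffineMap (a + a') (b + b') fun x =>
      Fin.append (f fun i => x (Fin.castAdd a' i)) (g fun i => x (Fin.natAdd a i)) := by
  have hl : IsAffineMap (a + a') a fun x i => x (Fin.castAdd a' i) :=
    isAffineMap_of_forall_mem fun _ => affineFunctions.apply_mem _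
  have hr : IsAffineMap (a + a') a' fun x i => x (Fin.natAdd a i) :=
    isAffineMap_of_forall_mem fun _ => affineFunctions.apply_mem _
  refine isAffineMap_of_forall_mem fun i => ?_
  refine Fin.addCases (fun i => ?_) (fun i => ?_) i
  · simpa only [Fin.append_left] using IsAffineMap.apply_mem (IsAffineMap.comp hf hl) i
  · simpa only [Fin.append_right] using IsAffineMap.apply_mem (IsAffineMap.comp hg hr) i

namespace ReluNetExact

variable {a b c N L : ℕ}

lemma one_le_depth {f : (Fin a → ℝ) → Fin b → ℝ} (h : ReluNetExact a b f N L) : 1 ≤ L := by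
  cases h <;> omega

lemma mono_width {N' : ℕ} {f : (Fin a → ℝ) → Fin b → ℝ} (h : ReluNetExact a b f N L)
    (hN : N ≤ N') : ReluNetExact a b f N' L := by
  induction h with
  | affine hf => exact .affine hf
  | comp hk hT _ ih => exact .comp (hk.trans hN) hT (ih hN)

lemma comp_affine {g : (Fin b → ℝ) → Fin c → ℝ} (hg : ReluNetExact b c g N L)
    {f : (Fin a → ℝ) → Fin b → ℝ} (hf : IsAffineMap a b f) :
    ReluNetExact a c (fun x => g (f x)) N L := by
  induction hg generalizing a with
  | affine hg => exact .affine (IsAffineMap.comp hg hf)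
  | comp hk hT _ _ => exact .comp hk (IsAffineMap.comp hT hf) ‹_›

lemma compose {f : (Fin a → ℝ) → Fin b → ℝ} (hf : ReluNetExact a b f N L)
    {L' : ℕ} {g : (Fin b → ℝ) → Fin c → ℝ} (hg : ReluNetExact b c g N L') :
    ReluNetExact a c (fun x => g (f x)) N (L + L' - 1) := by
  induction hf generalizing c L' with
  | affine hf => simpa using hg.comp_affine hf
  | comp hk hT _ ih =>
    have := hg.one_le_depth
    convert ReluNetExact.comp hk hT (ih hg) using 1
    omega

lemma affine_comp {f : (Fin a → ℝ) → Fin b → ℝ} (hf : ReluNetExact a b f N L)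
    {g : (Fin b → ℝ) → Fin c → ℝ} (hg : IsAffineMap b c g) :
    ReluNetExact a c (fun x => g (f x)) N L := by
  simpa using hf.compose (.affine (N := N) hg)

lemma append {a' b' N' : ℕ} {f : (Fin a → ℝ) → Fin b → ℝ} {g : (Fin a' → ℝ) → Fin b' → ℝ}
    (hf : ReluNetExact a b f N L) (hg : ReluNetExact a' b' g N' L) :
    ReluNetExact (a + a') (b + b')
      (fun x => Fin.append (f fun i => x (Fin.castAdd a' i)) (g fun i => x (Fin.natAdd a i)))
      (N + N') L := by
  induction hf generalizing a' b' g with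
  | affine hf =>
    cases hg with
    | affine hg => exact .affine (IsAffineMap.append hf hg)
    | comp _ _ hg => exact absurd hg.one_le_depth (by omega)
  | comp hk hT hf ih =>
    cases hg with
    | affine => exact absurd hf.one_le_depth (by omega)
    | comp hk' hT' hg =>
      have := ReluNetExact.comp (Nat.add_le_add hk hk') (IsAffineMap.append hT hT') (ih hg)
      convert this using 3 with x <;> simp only [Fin.append_left, Fin.append_right]

lemma exists_carry (c : ℕ) (hL : 1 ≤ L) :
    ∃ p : (Fin c → ℝ) → Fin c → ℝ, ReluNetExact c c p c L ∧ ∀ x, 0 ≤ x → p x = x := by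
  induction L, hL using Nat.le_induction with
  | base => exact ⟨id, .affine (isAffineMap_id c), fun _ _ => rfl⟩
  | succ L _ ih =>
    obtain ⟨p, hp, hpx⟩ := ih
    refine ⟨fun x => p fun i => max (id x i) 0, .comp le_rfl (isAffineMap_id c) hp, fun x hx => ?_⟩
    have hrelu : (fun i => max (id x i) 0) = x := funext fun i => max_eq_left (hx i)
    simp only [hrelu, hpx x hx]

end ReluNetExact

def IsProdApprox (k : ℕ) (Φ : (Fin k → ℝ) → ℝ) (ε : ℝ) : Prop :=
  ∀ x : Fin k → ℝ, (∀ i, x i ∈ Set.Icc (0 : ℝ) 1) →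
    Φ x ∈ Set.Icc (0 : ℝ) 1 ∧ |Φ x - ∏ i, x i| ≤ ε ∧ ((∃ i, x i = 0) → Φ x = 0)

/-- Chaining `n` copies of a two-input gate, `Φ (x₀, …, xₙ) = φ (Φ (x₀, …, xₙ₋₁), xₙ)`, where the
last input is carried alongside the network for the first `n`. -/
lemma IsProdApprox.exists_net {φ : (Fin 2 → ℝ) → ℝ} {ε : ℝ} {W D : ℕ} (hφ : IsProdApprox 2 φ ε)
    (hnet : ReluNetExact 2 1 (fun x _ => φ x) W (D + 1)) (n : ℕ) :
    ∃ Φ : (Fin (n + 1) → ℝ) → ℝ, ReluNetExact (n + 1) 1 (fun x _ => Φ x) (W + n) (n * D + 1) ∧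
      IsProdApprox (n + 1) Φ (n * ε) := by
  induction n with
  | zero =>
    refine ⟨fun x => x 0, by simpa using .affine (isAffineMap_of_forall_mem fun _ => apply_mem 0),
      fun x hx => ⟨hx 0, by simp, ?_⟩⟩
    rintro ⟨i, hi⟩
    rwa [Fin.fin_one_eq_zero i] at hi
  | succ n ih =>
    obtain ⟨Φ, hΦ, hΦx⟩ := ih
    obtain ⟨p, hp, hpx⟩ := ReluNetExact.exists_carry 1 (Nat.le_add_left 1 (n * D))
    have hcomp := (hΦ.append hp).compose (hnet.mono_width (N' := W + n + 1) (by omega))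
    refine ⟨_, by rw [add_mul, one_mul]; convert hcomp using 1 <;> omega, fun x hx => ?_⟩
    set y : Fin (n + 1) → ℝ := fun i => x (Fin.castAdd 1 i)
    have hv : Fin.append (fun _ : Fin 1 => Φ y) (p fun i => x (Fin.natAdd (n + 1) i)) =
        ![Φ y, x (Fin.last (n + 1))] := by
      rw [hpx _ fun i => (hx _).1]
      funext i
      fin_cases i <;> rfl
    simp only [hv]
    obtain ⟨hΦmem, hΦerr, hΦzero⟩ := hΦx y fun i => hx _
    have hlast := hx (Fin.last (n + 1))
    obtain ⟨hφmem, hφerr, hφzero⟩ := hφ ![Φ y, x (Fin.last (n + 1))] fun i => by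
      fin_cases i
      exacts [hΦmem, hlast]
    refine ⟨hφmem, ?_, ?_⟩
    · rw [Fin.prod_univ_two] at hφerr
      rw [Fin.prod_univ_castSucc]
      have hlast_abs : |x (Fin.last (n + 1))| ≤ 1 := abs_le.mpr ⟨by linarith [hlast.1], hlast.2⟩
      calc |φ ![Φ y, x (Fin.last (n + 1))] - (∏ i, y i) * x (Fin.last (n + 1))|
          ≤ |φ ![Φ y, x (Fin.last (n + 1))] - Φ y * x (Fin.last (n + 1))| +
            |Φ y - ∏ i, y i| * |x (Fin.last (n + 1))| := by
            rw [← abs_mul, sub_mul]; exact abs_sub_le _ _ _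
        _ ≤ ε + n * ε * 1 :=
          add_le_add hφerr (mul_le_mul hΦerr hlast_abs (abs_nonneg _) ((abs_nonneg _).trans hΦerr))
        _ = (n + 1 : ℕ) * ε := by push_cast; ring
    · rintro ⟨i, hi⟩
      apply hφzero
      rcases Fin.eq_castSucc_or_eq_last i with ⟨j, rfl⟩ | rfl
      · exact ⟨0, hΦzero ⟨j, hi⟩⟩
      · exact ⟨1, hi⟩

section Sawtooth

variable {q : ℕ}

def ramp (q : ℕ) (z : ℝ) (n : ℕ) : ℝ := max (2 * q * z - n) 0

def toothSum (q : ℕ) (w : ℕ → ℝ) : ℝ :=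
  ∑ m ∈ range q, (w (2 * m) - 2 * w (2 * m + 1) + w (2 * m + 2))

def chordSum (q : ℕ) (w : ℕ → ℝ) : ℝ := (2 * ∑ m ∈ range q, w (2 * m) - w 0) / (2 * q ^ 2)

/-- The triangle wave with `q` teeth of height `1` on `[0, 1]`. -/
def triangleWave (q : ℕ) (z : ℝ) : ℝ := toothSum q (ramp q z)

/-- The piecewise linear interpolant of `z ↦ z ^ 2` at the nodes `j / q`. -/
def chordInterp (q : ℕ) (z : ℝ) : ℝ := chordSum q (ramp q z)

lemma toothSum_congr {w w' : ℕ → ℝ} (h : ∀ n ≤ 2 * q, w n = w' n) :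
    toothSum q w = toothSum q w' :=
  sum_congr rfl fun m hm => by
    have := mem_range.mp hm
    rw [h (2 * m) (by omega), h (2 * m + 1) (by omega), h (2 * m + 2) (by omega)]

lemma chordSum_congr {w w' : ℕ → ℝ} (h : ∀ n ≤ 2 * q, w n = w' n) :
    chordSum q w = chordSum q w' := by
  unfold chordSum
  rw [h 0 (by omega), sum_congr rfl fun m hm => h (2 * m) (by have := mem_range.mp hm; omega)]

lemma ramp_combination_eq_hat (s : ℝ) (m : ℕ) :
    max (s - ↑(2 * m)) 0 - 2 * max (s - ↑(2 * m + 1)) 0 + max (s - ↑(2 * m + 2)) 0 =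
      max (1 - |s - 2 * m - 1|) 0 := by
  push_cast
  simp only [max_def, abs_eq_max_neg]
  split_ifs <;> linarith

lemma exists_cell (hq : 1 ≤ q) {z : ℝ} (hz : z ∈ Set.Icc (0 : ℝ) 1) :
    ∃ j < q, (j : ℝ) ≤ q * z ∧ q * z ≤ j + 1 := by
  have hqz : 0 ≤ q * z := mul_nonneg (Nat.cast_nonneg q) hz.1
  rcases (mul_le_of_le_one_right (Nat.cast_nonneg q) hz.2).lt_or_eq with h | h
  · refine ⟨⌊q * z⌋₊, ?_, Nat.floor_le hqz, (Nat.lt_floor_add_one _).le⟩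
    exact (Nat.floor_lt hqz).mpr h
  · refine ⟨q - 1, by omega, ?_, ?_⟩ <;> rw [h, Nat.cast_sub hq] <;> simp

lemma triangleWave_of_cell {j : ℕ} {z : ℝ} (hj : j < q) (hl : (j : ℝ) ≤ q * z)
    (hr : q * z ≤ j + 1) : triangleWave q z = 1 - |2 * q * z - 2 * j - 1| := by
  unfold triangleWave toothSum ramp
  simp only [ramp_combination_eq_hat]
  rw [sum_eq_single_of_mem j (mem_range.mpr hj) fun m _ hmj => max_eq_right ?_]
  · exact max_eq_left (by rw [sub_nonneg, abs_le]; constructor <;> linarith)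
  · rw [sub_nonpos, le_abs]
    rcases hmj.lt_or_gt with h | h
    · have : (m : ℝ) + 1 ≤ j := by exact_mod_cast h
      left; linarith
    · have : (j : ℝ) + 1 ≤ m := by exact_mod_cast h
      right; linarith

lemma sum_range_sub_two_mul (s : ℝ) (j : ℕ) :
    ∑ m ∈ range (j + 1), (s - 2 * m) = (j + 1) * s - j * (j + 1) := by
  induction j with
  | zero => simp
  | succ j ih => rw [sum_range_succ, ih]; push_cast; ring

lemma chordInterp_of_cell {j : ℕ} {z : ℝ} (hj : j < q) (hl : (j : ℝ) ≤ q * z)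
    (hr : q * z ≤ j + 1) :
    chordInterp q z = ((2 * j + 1) * (2 * q * z) - 2 * j * (j + 1)) / (2 * q ^ 2) := by
  have hramps : ∑ m ∈ range q, ramp q z (2 * m) = (j + 1) * (2 * q * z) - j * (j + 1) := by
    rw [← sum_range_add_sum_Ico _ (show j + 1 ≤ q by omega), ← sum_range_sub_two_mul,
      sum_eq_zero (s := Ico _ _) fun m hm => ?_, add_zero]
    · refine sum_congr rfl fun m hm => ?_
      have : (m : ℝ) ≤ j := by exact_mod_cast Nat.lt_succ_iff.mp (mem_range.mp hm)
      rw [ramp, max_eq_left] <;> push_cast <;> linarith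
    · have : (j : ℝ) + 1 ≤ m := by exact_mod_cast (mem_Ico.mp hm).1
      rw [ramp, max_eq_right]; push_cast; linarith
  have hramp0 : ramp q z 0 = 2 * q * z := by
    have : (0 : ℝ) ≤ j := Nat.cast_nonneg j
    rw [ramp, max_eq_left] <;> push_cast <;> linarith
  rw [chordInterp, chordSum, hramps, hramp0]
  ring

lemma triangleWave_mem (hq : 1 ≤ q) {z : ℝ} (hz : z ∈ Set.Icc (0 : ℝ) 1) :
    triangleWave q z ∈ Set.Icc (0 : ℝ) 1 := by
  obtain ⟨j, hj, hl, hr⟩ := exists_cell hq hz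
  rw [triangleWave_of_cell hj hl hr]
  constructor
  · rw [sub_nonneg, abs_le]; constructor <;> linarith
  · linarith [abs_nonneg (2 * q * z - 2 * j - 1)]

lemma triangleWave_zero : triangleWave q 0 = 0 := by
  unfold triangleWave toothSum
  refine sum_eq_zero fun m _ => ?_
  have hm : (0 : ℝ) ≤ m := m.cast_nonneg
  rw [ramp, ramp, ramp, mul_zero, ramp_combination_eq_hat, zero_sub, max_eq_right]
  rw [abs_of_neg (by linarith)]
  linarith

/-- On the cell `[j/q, (j+1)/q]` the interpolation error is `(z - j/q)((j+1)/q - z)`, which is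
again a parabola, in the variable `triangleWave q z`. -/
lemma chordInterp_sub_sq (hq : 1 ≤ q) {z : ℝ} (hz : z ∈ Set.Icc (0 : ℝ) 1) :
    chordInterp q z - z ^ 2 = triangleWave q z * (2 - triangleWave q z) / (2 * q) ^ 2 := by
  obtain ⟨j, hj, hl, hr⟩ := exists_cell hq hz
  have hq0 : (q : ℝ) ≠ 0 := by positivity
  rw [chordInterp_of_cell hj hl hr, triangleWave_of_cell hj hl hr]
  have habs : (1 - |2 * q * z - 2 * j - 1|) * (2 - (1 - |2 * q * z - 2 * j - 1|)) =
      1 - (2 * q * z - 2 * j - 1) ^ 2 := by rw [← sq_abs]; ring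
  rw [habs]
  field_simp
  ring

end Sawtooth

section SquareApprox

variable {q : ℕ}

/-- Starting from `2 t = t ^ 2 + t (2 - t)`, step `l` subtracts the chord interpolation of the
current error term `z (2 - z) / (2q) ^ (2l)`, `z = T^[l] t`; what remains is the same error
term for `T z`, scaled down by `(2q) ^ 2` (`sqApprox_eq`). -/
def sqApprox (q : ℕ) : ℕ → ℝ → ℝ
  | 0, t => 2 * t
  | l + 1, t => sqApprox q l t -
      (2 * (triangleWave q)^[l] t - chordInterp q ((triangleWave q)^[l] t)) / (2 * q) ^ (2 * l)

lemma iterate_triangleWave_mem (hq : 1 ≤ q) {t : ℝ} (ht : t ∈ Set.Icc (0 : ℝ) 1) (l : ℕ) :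
    (triangleWave q)^[l] t ∈ Set.Icc (0 : ℝ) 1 := by
  induction l with
  | zero => exact ht
  | succ l ih => rw [Function.iterate_succ_apply']; exact triangleWave_mem hq ih

lemma sqApprox_eq (hq : 1 ≤ q) {t : ℝ} (ht : t ∈ Set.Icc (0 : ℝ) 1) (l : ℕ) :
    sqApprox q l t = t ^ 2 +
      (triangleWave q)^[l] t * (2 - (triangleWave q)^[l] t) / (2 * q) ^ (2 * l) := by
  induction l with
  | zero => simp only [sqApprox, Function.iterate_zero_apply]; ring
  | succ l ih =>
    have hchord := chordInterp_sub_sq hq (iterate_triangleWave_mem hq ht l)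
    rw [sqApprox, ih, Function.iterate_succ_apply', mul_add, mul_one, pow_add, ← div_div,
      div_right_comm _ _ ((2 * (q : ℝ)) ^ 2), ← hchord]
    ring

lemma sqApprox_sub_sq_mem (hq : 1 ≤ q) {t : ℝ} (ht : t ∈ Set.Icc (0 : ℝ) 1) (l : ℕ) :
    sqApprox q l t - t ^ 2 ∈ Set.Icc (0 : ℝ) (1 / (2 * q) ^ (2 * l)) := by
  obtain ⟨hz0, hz1⟩ := iterate_triangleWave_mem hq ht l
  rw [sqApprox_eq hq ht, add_sub_cancel_left]
  constructor
  · exact div_nonneg (by nlinarith) (by positivity)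
  · gcongr
    nlinarith

lemma sqApprox_zero (hq : 1 ≤ q) (l : ℕ) : sqApprox q l 0 = 0 := by
  rw [sqApprox_eq hq ⟨le_rfl, zero_le_one⟩, Function.iterate_fixed triangleWave_zero]
  ring

end SquareApprox

section SquareNet

variable {q : ℕ}

def seqOf {d : ℕ} (v : Fin d → ℝ) (n : ℕ) : ℝ := if h : n < d then v ⟨n, h⟩ else 0

/-- Pre-activations of a hidden layer of the squaring network: the ramps `2 q z - n`, `n ≤ 2 q`,
followed by an accumulator `a`. -/
def sqState (q : ℕ) (z a : ℝ) : Fin (2 * q + 2) → ℝ :=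
  fun i => if (i : ℕ) < 2 * q + 1 then 2 * q * z - i else a

def sqLayer (q l : ℕ) (v : Fin (2 * q + 2) → ℝ) : Fin (2 * q + 2) → ℝ :=
  sqState q (toothSum q (seqOf v))
    (seqOf v (2 * q + 1) - (seqOf v 0 / q - chordSum q (seqOf v)) / (2 * q) ^ (2 * l))

lemma seqOf_mem (d n : ℕ) : (fun v : Fin d → ℝ => seqOf v n) ∈ affineFunctions d := by
  unfold seqOf
  split_ifs
  · exact apply_mem _
  · exact const_mem d 0

lemma toothSum_seqOf_mem (d : ℕ) :
    (fun v : Fin d → ℝ => toothSum q (seqOf v)) ∈ affineFunctions d :=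
  sum_mem' _ fun _ _ => add_mem' (sub_mem' (seqOf_mem d _) (const_mul_mem 2 (seqOf_mem d _)))
    (seqOf_mem d _)

lemma chordSum_seqOf_mem (d : ℕ) :
    (fun v : Fin d → ℝ => chordSum q (seqOf v)) ∈ affineFunctions d :=
  div_const_mem (sub_mem' (const_mul_mem 2 (sum_mem' _ fun _ _ => seqOf_mem d _)) (seqOf_mem d 0)) _

lemma isAffineMap_sqState {d : ℕ} {z a : (Fin d → ℝ) → ℝ} (hz : z ∈ affineFunctions d)
    (ha : a ∈ affineFunctions d) : IsAffineMap d (2 * q + 2) fun v => sqState q (z v) (a v) := by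
  refine isAffineMap_of_forall_mem fun i => ?_
  unfold sqState
  split_ifs
  · exact sub_mem' (const_mul_mem _ hz) (const_mem d _)
  · exact ha

lemma isAffineMap_sqLayer (q l : ℕ) : IsAffineMap (2 * q + 2) (2 * q + 2) (sqLayer q l) :=
  isAffineMap_sqState (toothSum_seqOf_mem _) (sub_mem' (seqOf_mem _ _)
    (div_const_mem (sub_mem' (div_const_mem (seqOf_mem _ 0) _) (chordSum_seqOf_mem _)) _))

lemma seqOf_relu_sqState {z a : ℝ} {n : ℕ} (hn : n ≤ 2 * q) :
    seqOf (fun i => max (sqState q z a i) 0) n = ramp q z n := by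
  simp only [seqOf, sqState, ramp, dif_pos (show n < 2 * q + 2 by omega),
    if_pos (show n < 2 * q + 1 by omega)]

lemma seqOf_relu_sqState_last {z a : ℝ} :
    seqOf (fun i => max (sqState q z a i) 0) (2 * q + 1) = max a 0 := by
  simp [seqOf, sqState]

lemma sqLayer_relu_sqState (hq : 1 ≤ q) (l : ℕ) {z a : ℝ} (hz : z ∈ Set.Icc (0 : ℝ) 1)
    (ha : 0 ≤ a) :
    sqLayer q l (fun i => max (sqState q z a i) 0) =
      sqState q (triangleWave q z) (a - (2 * z - chordInterp q z) / (2 * q) ^ (2 * l)) := by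
  have hramp0 : ramp q z 0 / q = 2 * z := by
    have : (q : ℝ) ≠ 0 := by positivity
    rw [ramp, Nat.cast_zero, sub_zero, max_eq_left (by have := hz.1; positivity)]
    field_simp
  rw [sqLayer, seqOf_relu_sqState_last, max_eq_left ha, seqOf_relu_sqState (Nat.zero_le _),
    hramp0, toothSum_congr fun n hn => seqOf_relu_sqState hn,
    chordSum_congr fun n hn => seqOf_relu_sqState hn]
  rfl

lemma exists_net_sqState (hq : 1 ≤ q) (l : ℕ) :
    ∃ P : (Fin 1 → ℝ) → Fin (2 * q + 2) → ℝ, ReluNetExact 1 (2 * q + 2) P (2 * q + 2) (l + 1) ∧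
      ∀ x, x 0 ∈ Set.Icc (0 : ℝ) 1 →
        P x = sqState q ((triangleWave q)^[l] (x 0)) (sqApprox q l (x 0)) := by
  induction l with
  | zero =>
    exact ⟨fun x => sqState q (x 0) (2 * x 0),
      .affine (isAffineMap_sqState (apply_mem 0) (const_mul_mem 2 (apply_mem 0))), fun x _ => rfl⟩
  | succ l ih =>
    obtain ⟨P, hP, hPx⟩ := ih
    have hlayer := ReluNetExact.comp le_rfl (isAffineMap_id _) (.affine (isAffineMap_sqLayer q l))
    refine ⟨_, hP.compose hlayer, fun x hx => ?_⟩
    have ha : 0 ≤ sqApprox q l (x 0) := by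
      linarith [(sqApprox_sub_sq_mem hq hx l).1, sq_nonneg (x 0)]
    simp only [id, hPx x hx, sqLayer_relu_sqState hq l (iterate_triangleWave_mem hq hx l) ha,
      Function.iterate_succ_apply', sqApprox]

lemma exists_net_sqApprox (hq : 1 ≤ q) (r : ℕ) :
    ∃ S : (Fin 1 → ℝ) → Fin 1 → ℝ, ReluNetExact 1 1 S (2 * q + 2) (r + 1) ∧
      ∀ x, x 0 ∈ Set.Icc (0 : ℝ) 1 → S x 0 = sqApprox q r (x 0) := by
  obtain ⟨P, hP, hPx⟩ := exists_net_sqState hq r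
  have hlast : IsAffineMap (2 * q + 2) 1 fun v _ => v (Fin.last _) :=
    isAffineMap_of_forall_mem fun _ => apply_mem _
  exact ⟨_, hP.affine_comp hlast, fun x hx => by simp [hPx x hx, sqState]⟩

end SquareNet

section Gate

variable {q : ℕ}

lemma exists_net_mulApprox (hq : 1 ≤ q) (r : ℕ) :
    ∃ M : (Fin 2 → ℝ) → Fin 1 → ℝ, ReluNetExact 2 1 M (3 * (2 * q + 2)) (r + 1) ∧
      ∀ x : Fin 2 → ℝ, (∀ i, x i ∈ Set.Icc (0 : ℝ) 1) →
        M x 0 = 2 * (sqApprox q r ((x 0 + x 1) / 2) - sqApprox q r (x 0 / 2) -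
          sqApprox q r (x 1 / 2)) := by
  obtain ⟨S, hS, hSx⟩ := exists_net_sqApprox hq r
  have hin : IsAffineMap 2 (1 + 1 + 1) fun x => ![(x 0 + x 1) / 2, x 0 / 2, x 1 / 2] := by
    refine isAffineMap_of_forall_mem fun i => ?_
    fin_cases i
    · exact div_const_mem (add_mem' (apply_mem 0) (apply_mem 1)) 2
    · exact div_const_mem (apply_mem 0) 2
    · exact div_const_mem (apply_mem 1) 2
  have hout : IsAffineMap (1 + 1 + 1) 1 fun v _ => 2 * (v 0 - v 1 - v 2) :=
    isAffineMap_of_forall_mem fun _ =>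
      const_mul_mem 2 (sub_mem' (sub_mem' (apply_mem 0) (apply_mem 1)) (apply_mem 2))
  have hnet := ((hS.append hS).append hS).comp_affine hin |>.affine_comp hout
  refine ⟨_, hnet.mono_width (by omega), fun x hx => ?_⟩
  obtain ⟨⟨h0, h1⟩, ⟨h0', h1'⟩⟩ := And.intro (hx 0) (hx 1)
  have hS' : ∀ t ∈ Set.Icc (0 : ℝ) 1, S (fun _ => t) 0 = sqApprox q r t := fun t ht => hSx _ ht
  simp [Fin.append, Fin.addCases, Fin.fin_one_eq_zero,
    hS' ((x 0 + x 1) / 2) ⟨by linarith, by linarith⟩, hS' (x 0 / 2) ⟨by linarith, by linarith⟩,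
    hS' (x 1 / 2) ⟨by linarith, by linarith⟩]

lemma abs_polarize_sub_mul_le {f : ℝ → ℝ} {ε a b : ℝ}
    (hf : ∀ t ∈ Set.Icc (0 : ℝ) 1, f t - t ^ 2 ∈ Set.Icc 0 ε) (ha : a ∈ Set.Icc (0 : ℝ) 1)
    (hb : b ∈ Set.Icc (0 : ℝ) 1) :
    |2 * (f ((a + b) / 2) - f (a / 2) - f (b / 2)) - a * b| ≤ 4 * ε := by
  obtain ⟨⟨ha0, ha1⟩, ⟨hb0, hb1⟩⟩ := And.intro ha hb
  have h₁ := hf ((a + b) / 2) ⟨by linarith, by linarith⟩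
  have h₂ := hf (a / 2) ⟨by linarith, by linarith⟩
  have h₃ := hf (b / 2) ⟨by linarith, by linarith⟩
  have hpolar : 2 * (((a + b) / 2) ^ 2 - (a / 2) ^ 2 - (b / 2) ^ 2) = a * b := by ring
  rw [abs_le]
  constructor <;> linarith [h₁.1, h₁.2, h₂.1, h₂.2, h₃.1, h₃.2]

lemma reluNetExact_projIcc {N : ℕ} (hN : 1 ≤ N) :
    ReluNetExact 1 1 (fun x _ => (Set.projIcc (0 : ℝ) 1 zero_le_one (x 0) : ℝ)) N 3 := by
  have hflip : IsAffineMap 1 1 fun w _ => 1 - w 0 :=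
    isAffineMap_of_forall_mem fun _ => sub_mem' (const_mem 1 1) (apply_mem 0)
  convert ReluNetExact.comp hN (isAffineMap_id 1) (.comp hN hflip (.affine hflip)) using 1
  funext x _
  simp only [Set.coe_projIcc, id]
  rcases le_total (x 0) 0 with h | h
  · simp [h]
  · rcases le_total (x 0) 1 with h' | h' <;> simp [h, h']

lemma exists_net_prodApprox_two (hq : 1 ≤ q) (r : ℕ) :
    ∃ φ : (Fin 2 → ℝ) → ℝ, ReluNetExact 2 1 (fun x _ => φ x) (3 * (2 * q + 2)) (r + 3) ∧
      IsProdApprox 2 φ (4 / (2 * q) ^ (2 * r)) := by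
  obtain ⟨M, hM, hMx⟩ := exists_net_mulApprox hq r
  refine ⟨fun x => Set.projIcc (0 : ℝ) 1 zero_le_one (M x 0),
    hM.compose (reluNetExact_projIcc (by omega)), fun x hx => ⟨Subtype.prop _, ?_, ?_⟩⟩
  · have hxx : x 0 * x 1 ∈ Set.Icc (0 : ℝ) 1 := ⟨mul_nonneg (hx 0).1 (hx 1).1,
      mul_le_one₀ (hx 0).2 (hx 1).1 (hx 1).2⟩
    have hproj : (Set.projIcc (0 : ℝ) 1 zero_le_one (x 0 * x 1) : ℝ) = x 0 * x 1 := by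
      rw [Set.projIcc_of_mem zero_le_one hxx]
    rw [Fin.prod_univ_two, ← hproj]
    refine (Set.abs_projIcc_sub_projIcc _).trans ?_
    rw [hMx x hx]
    simpa only [mul_one_div] using
      abs_polarize_sub_mul_le (fun t ht => sqApprox_sub_sq_mem hq ht r) (hx 0) (hx 1)
  · rintro ⟨i, hi⟩
    have hM0 : M x 0 = 0 := by
      rw [hMx x hx]
      fin_cases i <;> simp only [Fin.zero_eta, Fin.mk_one] at hi <;>
        simp [hi, sqApprox_zero hq]
    simp [hM0]

end Gate

lemma four_div_pow_le {N m : ℕ} (hN : 1 ≤ N) :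
    4 / (2 * N : ℝ) ^ (2 * (4 * m)) ≤ 9 * ((N : ℝ) + 1) ^ (-(7 * (m : ℤ))) := by
  have hN' : (1 : ℝ) ≤ N := by exact_mod_cast hN
  have hpow : ((N : ℝ) + 1) ^ (7 * m) ≤ (2 * N : ℝ) ^ (2 * (4 * m)) :=
    calc ((N : ℝ) + 1) ^ (7 * m) ≤ (2 * N : ℝ) ^ (7 * m) := by gcongr; linarith
      _ ≤ (2 * N : ℝ) ^ (2 * (4 * m)) := pow_le_pow_right₀ (by linarith) (by omega)
  rw [show -(7 * (m : ℤ)) = -((7 * m : ℕ) : ℤ) by push_cast; ring, zpow_neg, zpow_natCast,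
    ← div_eq_mul_inv]
  calc 4 / (2 * N : ℝ) ^ (2 * (4 * m)) ≤ 9 / (2 * N : ℝ) ^ (2 * (4 * m)) := by gcongr; norm_num
    _ ≤ 9 / ((N : ℝ) + 1) ^ (7 * m) := by gcongr

/-- Lemma `product app`: approximation of the product function on
`[0,1]^k`. -/
theorem stmt13 (N L k : ℕ) (hN : 0 < N) (hL : 0 < L) (hk : 2 ≤ k) :
    ∃ Φ : (Fin k → ℝ) → ℝ,
      IsReluNet1 k Φ (9 * N + k + 7) (7 * k * (k - 1) * L) ∧
      (∀ x : Fin k → ℝ, (∀ i, x i ∈ Set.Icc (0:ℝ) 1) →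
        |Φ x - ∏ i, x i| ≤ 9 * ((k : ℝ) - 1) * ((N : ℝ) + 1) ^ (-(7 * (k : ℤ) * (L : ℤ)))) ∧
      (∀ x : Fin k → ℝ, (∀ i, x i ∈ Set.Icc (0:ℝ) 1) → (∃ i, x i = 0) → Φ x = 0) := by
  obtain ⟨n, rfl⟩ : ∃ n, k = n + 1 := ⟨k - 1, by omega⟩
  obtain ⟨φ, hφnet, hφ⟩ := exists_net_prodApprox_two hN (4 * ((n + 1) * L))
  obtain ⟨Φ, hΦnet, hΦ⟩ := hφ.exists_net hφnet n
  refine ⟨Φ, ⟨_, ?_, hΦnet.mono_width (by omega)⟩, fun x hx => (hΦ x hx).2.1.trans ?_,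
    fun x hx => (hΦ x hx).2.2⟩
  · have hP : 2 ≤ (n + 1) * L := by nlinarith
    simp only [Nat.add_sub_cancel]
    nlinarith [Nat.mul_le_mul (show 1 ≤ n by omega) hP]
  · calc (n : ℝ) * (4 / (2 * N : ℝ) ^ (2 * (4 * ((n + 1) * L))))
        ≤ n * (9 * ((N : ℝ) + 1) ^ (-(7 * (((n + 1) * L : ℕ) : ℤ)))) := by
          gcongr; exact four_div_pow_le hN
      _ = _ := by push_cast; ring_nf
end
end
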